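/- Let X be a compact complex manifold of complex dimension n and ω a Hermitian metric whose (n−1)-st power satisfies ω^{n−1} = ∂α + ∂̄β for smooth forms α of bidegree (n−2, n−1) and β of bidegree (n−1, n−2). Then Ω := d(α + β) is a d-exact real (2n−2)-form on X whose (n−1, n−1)-component equals ω^{n−1}. Conversely, if there exists a smooth d-exact (2n−2)-form Ω on X whose (n−1,n−1)-component is ω^{n−1}, then ω^{n−1} ∈ Im ∂ + Im ∂̄. -/
import Mathlib

set_option synthInstance.maxHeartbeats 1000000
set_option maxHeartbeats 1000000

section Aux

variable {M : Type*} [AddCommGroup M] [Module ℂ M]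
  (ℳ : ℤ × ℤ → Submodule ℂ M) [DirectSum.Decomposition ℳ]

lemma stmt9_decompose_sum {ι : Type*} (s : Finset ι) (f : ι → M) (j : ℤ × ℤ) :
    (DirectSum.decompose ℳ (∑ i ∈ s, f i) j : M)
      = ∑ i ∈ s, (DirectSum.decompose ℳ (f i) j : M) := by
  induction s using Finset.cons_induction with
  | empty => simp
  | cons a s ha ih =>
    rw [Finset.sum_cons, Finset.sum_cons, DirectSum.decompose_add, ← ih]
    rfl

lemma stmt9_key (D : M →ₗ[ℂ] M) (a b : ℤ)
    (hD : ∀ p q : ℤ, ∀ x ∈ ℳ (p, q), D x ∈ ℳ (p + a, q + b)) (t : M) (p q : ℤ) :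
    (DirectSum.decompose ℳ (D t) (p + a, q + b) : M)
      = D (DirectSum.decompose ℳ t (p, q) : M) := by
  classical
  conv_lhs => rw [← DirectSum.sum_support_decompose ℳ t]
  rw [map_sum, stmt9_decompose_sum]
  rw [Finset.sum_eq_single (p, q)]
  · exact DirectSum.decompose_of_mem_same ℳ
      (hD p q _ (DirectSum.decompose ℳ t (p, q)).2)
  · intro i hi hne
    have hmem : (DirectSum.decompose ℳ t i : M) ∈ ℳ (i.1, i.2) := by
      simpa using (DirectSum.decompose ℳ t i).2
    refine DirectSum.decompose_of_mem_ne ℳ (hD i.1 i.2 _ hmem) ?_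
    intro h
    apply hne
    have h1 : i.1 + a = p + a := congrArg Prod.fst h
    have h2 : i.2 + b = q + b := congrArg Prod.snd h
    exact Prod.ext (by omega) (by omega)
  · intro h
    have : DirectSum.decompose ℳ t (p, q) = 0 := DFinsupp.notMem_support_iff.mp h
    rw [this]
    simp

end Aux

/-- Theorem 2.7(1): The space of smooth complex forms is modelled
as a bigraded module `M = ⊕ ℳ(p,q)` with operators `∂`, `∂̄` of bidegrees
`(1,0)`, `(0,1)`, and `d = ∂ + ∂̄`. If `ω^{n−1} = ∂α + ∂̄β` with `α` of bidegree
`(n−2,n−1)` and `β` of bidegree `(n−1,n−2)`, then the `(n−1,n−1)`-component of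
the `d`-exact form `Ω := d(α+β)` equals `ω^{n−1}`. Conversely, if some `d`-exact
form `dΘ` has `(n−1,n−1)`-component `ω^{n−1}`, then `ω^{n−1} ∈ Im ∂ + Im ∂̄`. -/
theorem stmt9 {M : Type*} [AddCommGroup M] [Module ℂ M]
    (ℳ : ℤ × ℤ → Submodule ℂ M) [DirectSum.Decomposition ℳ]
    (del delbar : M →ₗ[ℂ] M)
    (hdel : ∀ (p q : ℤ), ∀ x ∈ ℳ (p, q), del x ∈ ℳ (p + 1, q))
    (hdelbar : ∀ (p q : ℤ), ∀ x ∈ ℳ (p, q), delbar x ∈ ℳ (p, q + 1))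
    (n : ℤ) (ω α β : M)
    (hω : ω ∈ ℳ (n - 1, n - 1)) (hα : α ∈ ℳ (n - 2, n - 1)) (hβ : β ∈ ℳ (n - 1, n - 2)) :
    (ω = del α + delbar β →
      ((DirectSum.decompose ℳ (del (α + β) + delbar (α + β)) (n - 1, n - 1) : M) = ω)) ∧
    (∀ Θ : M, ((DirectSum.decompose ℳ (del Θ + delbar Θ) (n - 1, n - 1) : M) = ω) →
      ω ∈ LinearMap.range del ⊔ LinearMap.range delbar) := by
  have hdel' : ∀ p q : ℤ, ∀ x ∈ ℳ (p, q), del x ∈ ℳ (p + 1, q + 0) := by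
    intro p q x hx; simpa using hdel p q x hx
  have hdelbar' : ∀ p q : ℤ, ∀ x ∈ ℳ (p, q), delbar x ∈ ℳ (p + 0, q + 1) := by
    intro p q x hx; simpa using hdelbar p q x hx
  constructor
  · intro h
    have h1 : del α ∈ ℳ (n - 1, n - 1) := by
      have := hdel (n - 2) (n - 1) α hα
      rwa [show n - 2 + 1 = n - 1 by ring] at this
    have h2 : delbar β ∈ ℳ (n - 1, n - 1) := by
      have := hdelbar (n - 1) (n - 2) β hβ
      rwa [show n - 2 + 1 = n - 1 by ring] at this
    have h3 : del β ∈ ℳ (n, n - 2) := by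
      have := hdel (n - 1) (n - 2) β hβ
      rwa [show n - 1 + 1 = n by ring] at this
    have h4 : delbar α ∈ ℳ (n - 2, n) := by
      have := hdelbar (n - 2) (n - 1) α hα
      rwa [show n - 1 + 1 = n by ring] at this
    have e1 : (DirectSum.decompose ℳ (del α) (n - 1, n - 1) : M) = del α :=
      DirectSum.decompose_of_mem_same ℳ h1
    have e2 : (DirectSum.decompose ℳ (delbar β) (n - 1, n - 1) : M) = delbar β :=
      DirectSum.decompose_of_mem_same ℳ h2
    have e3 : (DirectSum.decompose ℳ (del β) (n - 1, n - 1) : M) = 0 :=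
      DirectSum.decompose_of_mem_ne ℳ h3 (by intro hc; have := congrArg Prod.fst hc; simp at this; omega)
    have e4 : (DirectSum.decompose ℳ (delbar α) (n - 1, n - 1) : M) = 0 :=
      DirectSum.decompose_of_mem_ne ℳ h4 (by intro hc; have := congrArg Prod.snd hc; simp at this; omega)
    rw [h]
    simp only [map_add, DirectSum.decompose_add, DirectSum.add_apply, Submodule.coe_add,
      e1, e2, e3, e4]
    abel
  · intro Θ hΘ
    have k1 := stmt9_key ℳ del 1 0 hdel' Θ (n - 2) (n - 1)
    have k2 := stmt9_key ℳ delbar 0 1 hdelbar' Θ (n - 1) (n - 2)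
    rw [show n - 2 + 1 = n - 1 by ring, show n - 1 + (0 : ℤ) = n - 1 by ring] at k1
    rw [show n - 2 + 1 = n - 1 by ring, show n - 1 + (0 : ℤ) = n - 1 by ring] at k2
    have hsum : ω = del (DirectSum.decompose ℳ Θ (n - 2, n - 1) : M)
        + delbar (DirectSum.decompose ℳ Θ (n - 1, n - 2) : M) := by
      rw [← k1, ← k2, ← hΘ]
      simp [DirectSum.decompose_add]
    rw [hsum]
    exact Submodule.add_mem_sup ⟨_, rfl⟩ ⟨_, rfl⟩
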